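/- arXiv:1009.5033 — 2 statements merged into one kernel-verified Lean document; each statement's English description precedes it below -/
import Mathlib

section
/- For 0 < z ≤ 1/10, the ratio of Bessel functions satisfies | (K_1(z)/K_2(z))² − z²/4 | ≤ 2z³. -/
/-!
With `A = ∫_z^∞ e^{-λ} √(λ² - z²) dλ` and `B = ∫_z^∞ λ e^{-λ} √(λ² - z²) dλ` we have
`K₁(z) / K₂(z) = z A / B`. The pointwise bounds `λ - z ≤ √(λ² - z²) ≤ λ` and
`λ² - z² ≤ λ √(λ² - z²) ≤ λ²` sandwich `A` and `B` between integrals of quadratics times `e^{-λ}`,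
which are explicit: `e^{-z} ≤ A ≤ (z + 1) e^{-z}` and `(2z + 2) e^{-z} ≤ B ≤ (z² + 2z + 2) e^{-z}`.
So `1 / (z² + 2z + 2) ≤ A / B ≤ 1 / 2`, and the claim reduces to a polynomial inequality in `z`.
-/

open Real MeasureTheory

/-- `K_1(z) = z⁻¹ ∫_z^∞ e^{-λ}(λ²−z²)^{1/2} dλ`. -/
noncomputable def K1 (z : ℝ) : ℝ :=
  z⁻¹ * ∫ l in Set.Ioi z, Real.exp (-l) * Real.sqrt (l ^ 2 - z ^ 2)

/-- `K_2(z) = z⁻² ∫_z^∞ λ e^{-λ}(λ²−z²)^{1/2} dλ`. -/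
noncomputable def K2 (z : ℝ) : ℝ :=
  z ^ (-2 : ℤ) * ∫ l in Set.Ioi z, l * Real.exp (-l) * Real.sqrt (l ^ 2 - z ^ 2)

open Set Filter Topology

theorem setIntegral_mem_Icc_of_le_of_le {α : Type*} [MeasurableSpace α] {μ : Measure α}
    {f g h : α → ℝ} {s : Set α} (hs : MeasurableSet s) (hf : AEStronglyMeasurable f (μ.restrict s))
    (hg : IntegrableOn g s μ) (hh : IntegrableOn h s μ)
    (hgf : ∀ x ∈ s, g x ≤ f x) (hfh : ∀ x ∈ s, f x ≤ h x) :
    ∫ x in s, f x ∂μ ∈ Icc (∫ x in s, g x ∂μ) (∫ x in s, h x ∂μ) := by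
  have hfs : IntegrableOn f s μ :=
    integrable_of_le_of_le hf ((ae_restrict_iff' hs).2 (.of_forall hgf))
      ((ae_restrict_iff' hs).2 (.of_forall hfh)) hg hh
  exact ⟨setIntegral_mono_on hg hfs hs hgf, setIntegral_mono_on hfs hh hs hfh⟩

section QuadraticMulExpNeg

variable (a b c : ℝ)

theorem hasDerivAt_quadratic_mul_exp_neg (x : ℝ) :
    HasDerivAt (fun x => -(a * x ^ 2 + (2 * a + b) * x + (2 * a + b + c)) * exp (-x))
      ((a * x ^ 2 + b * x + c) * exp (-x)) x := by
  have h := ((((hasDerivAt_pow 2 x).const_mul a).add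
    ((hasDerivAt_id' x).const_mul (2 * a + b))).add_const (2 * a + b + c)).neg.mul
    (hasDerivAt_neg x).exp
  exact h.congr_deriv (by norm_num; ring)

theorem tendsto_quadratic_mul_exp_neg_atTop :
    Tendsto (fun x => (a * x ^ 2 + b * x + c) * exp (-x)) atTop (𝓝 0) := by
  have h := fun n => tendsto_pow_mul_exp_neg_atTop_nhds_zero n
  convert (((h 2).const_mul a).add ((h 1).const_mul b)).add ((h 0).const_mul c) using 2
  · ring
  · simp

variable {a b c} {d : ℝ}

theorem integrableOn_Ioi_quadratic_mul_exp_neg (hp : ∀ x ∈ Ioi d, 0 ≤ a * x ^ 2 + b * x + c) :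
    IntegrableOn (fun x => (a * x ^ 2 + b * x + c) * exp (-x)) (Ioi d) :=
  integrableOn_Ioi_deriv_of_nonneg' (fun x _ => hasDerivAt_quadratic_mul_exp_neg a b c x)
    (fun x hx => mul_nonneg (hp x hx) (exp_pos _).le)
    (by simpa only [neg_mul, neg_zero] using
      (tendsto_quadratic_mul_exp_neg_atTop a (2 * a + b) (2 * a + b + c)).neg)

theorem integral_Ioi_quadratic_mul_exp_neg (hp : ∀ x ∈ Ioi d, 0 ≤ a * x ^ 2 + b * x + c) :
    ∫ x in Ioi d, (a * x ^ 2 + b * x + c) * exp (-x) =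
      (a * d ^ 2 + (2 * a + b) * d + (2 * a + b + c)) * exp (-d) := by
  rw [integral_Ioi_of_hasDerivAt_of_nonneg' (fun x _ => hasDerivAt_quadratic_mul_exp_neg a b c x)
    (fun x hx => mul_nonneg (hp x hx) (exp_pos _).le)
    (by simpa only [neg_mul, neg_zero] using
      (tendsto_quadratic_mul_exp_neg_atTop a (2 * a + b) (2 * a + b + c)).neg)]
  ring

end QuadraticMulExpNeg

theorem sqrt_sq_sub_sq_le {l : ℝ} (hl : 0 ≤ l) (z : ℝ) : √(l ^ 2 - z ^ 2) ≤ l :=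
  (sqrt_le_left hl).2 (by nlinarith)

theorem sub_le_sqrt_sq_sub_sq {z l : ℝ} (hz : 0 ≤ z) (hl : z ≤ l) : l - z ≤ √(l ^ 2 - z ^ 2) :=
  le_sqrt_of_sq_le (by nlinarith)

theorem sq_sub_sq_le_mul_sqrt {l : ℝ} (hl : 0 ≤ l) (z : ℝ) : l ^ 2 - z ^ 2 ≤ l * √(l ^ 2 - z ^ 2) :=
  calc l ^ 2 - z ^ 2 ≤ √(l ^ 2 - z ^ 2) ^ 2 := by rw [sq_sqrt']; exact le_max_left _ _
    _ ≤ l * √(l ^ 2 - z ^ 2) := by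
      rw [sq]; exact mul_le_mul_of_nonneg_right (sqrt_sq_sub_sq_le hl z) (sqrt_nonneg _)

theorem integral_exp_neg_mul_sqrt_mem_Icc {z : ℝ} (hz : 0 ≤ z) :
    ∫ l in Ioi z, exp (-l) * √(l ^ 2 - z ^ 2) ∈ Icc (exp (-z)) ((z + 1) * exp (-z)) := by
  have hlow (l : ℝ) (hl : l ∈ Ioi z) : 0 ≤ 0 * l ^ 2 + 1 * l + -z := by linarith [hl.out]
  have hup (l : ℝ) (hl : l ∈ Ioi z) : 0 ≤ 0 * l ^ 2 + 1 * l + 0 := by linarith [hl.out]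
  have h := setIntegral_mem_Icc_of_le_of_le measurableSet_Ioi
    (f := fun l => exp (-l) * √(l ^ 2 - z ^ 2)) (by fun_prop)
    (integrableOn_Ioi_quadratic_mul_exp_neg hlow) (integrableOn_Ioi_quadratic_mul_exp_neg hup)
    (fun l hl => ?_) (fun l hl => ?_)
  · rw [integral_Ioi_quadratic_mul_exp_neg hlow, integral_Ioi_quadratic_mul_exp_neg hup] at h
    convert h using 2 <;> ring
  · calc (0 * l ^ 2 + 1 * l + -z) * exp (-l) = exp (-l) * (l - z) := by ring
      _ ≤ exp (-l) * √(l ^ 2 - z ^ 2) := by gcongr; exact sub_le_sqrt_sq_sub_sq hz hl.out.le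
  · calc exp (-l) * √(l ^ 2 - z ^ 2) ≤ exp (-l) * l := by
          gcongr; exact sqrt_sq_sub_sq_le (hz.trans hl.out.le) z
      _ = (0 * l ^ 2 + 1 * l + 0) * exp (-l) := by ring

theorem integral_mul_exp_neg_mul_sqrt_mem_Icc {z : ℝ} (hz : 0 ≤ z) :
    ∫ l in Ioi z, l * exp (-l) * √(l ^ 2 - z ^ 2) ∈
      Icc ((2 * z + 2) * exp (-z)) ((z ^ 2 + 2 * z + 2) * exp (-z)) := by
  have hlow (l : ℝ) (hl : l ∈ Ioi z) : 0 ≤ 1 * l ^ 2 + 0 * l + -z ^ 2 := by nlinarith [hl.out]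
  have hup (l : ℝ) (_ : l ∈ Ioi z) : 0 ≤ 1 * l ^ 2 + 0 * l + 0 := by nlinarith
  have h := setIntegral_mem_Icc_of_le_of_le measurableSet_Ioi
    (f := fun l => l * exp (-l) * √(l ^ 2 - z ^ 2)) (by fun_prop)
    (integrableOn_Ioi_quadratic_mul_exp_neg hlow) (integrableOn_Ioi_quadratic_mul_exp_neg hup)
    (fun l hl => ?_) (fun l hl => ?_)
  · rw [integral_Ioi_quadratic_mul_exp_neg hlow, integral_Ioi_quadratic_mul_exp_neg hup] at h
    convert h using 2 <;> ring
  · calc (1 * l ^ 2 + 0 * l + -z ^ 2) * exp (-l) = (l ^ 2 - z ^ 2) * exp (-l) := by ring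
      _ ≤ l * √(l ^ 2 - z ^ 2) * exp (-l) := by
        gcongr; exact sq_sub_sq_le_mul_sqrt (hz.trans hl.out.le) z
      _ = l * exp (-l) * √(l ^ 2 - z ^ 2) := by ring
  · have hl₀ : 0 ≤ l := hz.trans hl.out.le
    calc l * exp (-l) * √(l ^ 2 - z ^ 2) ≤ l * exp (-l) * l := by
          gcongr; exact sqrt_sq_sub_sq_le hl₀ z
      _ = (1 * l ^ 2 + 0 * l + 0) * exp (-l) := by ring

theorem K1_div_K2 {z : ℝ} (hz : z ≠ 0) :
    K1 z / K2 z = z * ((∫ l in Ioi z, exp (-l) * √(l ^ 2 - z ^ 2)) /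
      ∫ l in Ioi z, l * exp (-l) * √(l ^ 2 - z ^ 2)) := by
  rw [K1, K2, zpow_neg, zpow_two]
  field_simp

theorem abs_sq_mul_sub_sq_div_four_le {z r : ℝ} (hz : 0 ≤ z) (hr₀ : 1 / (z ^ 2 + 2 * z + 2) ≤ r)
    (hr₁ : r ≤ 1 / 2) : |(z * r) ^ 2 - z ^ 2 / 4| ≤ 2 * z ^ 3 := by
  have hq : 0 < z ^ 2 + 2 * z + 2 := by positivity
  have hrq : 1 ≤ r * (z ^ 2 + 2 * z + 2) := by rwa [div_le_iff₀ hq] at hr₀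
  have hr_sq_le : r ^ 2 ≤ 1 / 4 := by nlinarith
  have le_r_sq : 1 / 4 - 2 * z ≤ r ^ 2 := by
    have hpoly : (1 / 4 - 2 * z) * (z ^ 2 + 2 * z + 2) ^ 2 ≤ 1 := by
      nlinarith [pow_nonneg hz 2, pow_nonneg hz 3, pow_nonneg hz 4, pow_nonneg hz 5]
    have : (1 / 4 - 2 * z) * (z ^ 2 + 2 * z + 2) ^ 2 ≤ r ^ 2 * (z ^ 2 + 2 * z + 2) ^ 2 := by
      nlinarith
    exact le_of_mul_le_mul_right this (by positivity)
  rw [abs_le]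
  constructor <;> nlinarith [mul_le_mul_of_nonneg_left le_r_sq (sq_nonneg z),
    mul_le_mul_of_nonneg_left hr_sq_le (sq_nonneg z)]

theorem ratio_sq_small_z_general (z : ℝ) (hz : 0 < z) :
    |(K1 z / K2 z) ^ 2 - z ^ 2 / 4| ≤ 2 * z ^ 3 := by
  obtain ⟨hA₀, hA₁⟩ := integral_exp_neg_mul_sqrt_mem_Icc hz.le
  obtain ⟨hB₀, hB₁⟩ := integral_mul_exp_neg_mul_sqrt_mem_Icc hz.le
  have hE := exp_pos (-z)
  have hB : 0 < ∫ l in Ioi z, l * exp (-l) * √(l ^ 2 - z ^ 2) :=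
    lt_of_lt_of_le (by positivity) hB₀
  rw [K1_div_K2 hz.ne']
  refine abs_sq_mul_sub_sq_div_four_le hz.le ?_ ?_
  · rw [div_le_div_iff₀ (by positivity) hB]
    nlinarith
  · rw [div_le_div_iff₀ hB two_pos]
    nlinarith

/-- For `0 < z ≤ 1/10`, `|(K_1(z)/K_2(z))² − z²/4| ≤ 2z³`. -/
theorem ratio_sq_small_z (z : ℝ) (hz : 0 < z) (hz' : z ≤ 1 / 10) :
    |(K1 z / K2 z) ^ 2 - z ^ 2 / 4| ≤ 2 * z ^ 3 :=
  ratio_sq_small_z_general z hz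
end

section
/- For z ≥ 10 one has | K_1(z)/K_2(z) − 1 + 3/(2z) − 15/(8z²) | ≤ 16/z³. -/
open Real MeasureTheory

/-- The paper's modified Bessel function `K_j(z)`. -/
noncomputable def Kb (j : ℕ) (z : ℝ) : ℝ :=
  ((2 ^ j * Nat.factorial j : ℝ) / (Nat.factorial (2 * j) : ℝ)) * z ^ (-(j : ℤ)) *
    ∫ l in Set.Ioi z, Real.exp (-l) * (l ^ 2 - z ^ 2) ^ ((j : ℝ) - 1 / 2)

/-!
Substituting `l = z + t` and factoring `l² - z² = 2z · t · (1 + t/(2z))` writes `K_j(z)` as an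
explicit factor times `∫₀^∞ e^{-t} t^{j-1/2} (1 + t/(2z))^{j-1/2} dt`, so `K_1(z)/K_2(z)` is
`3/2` times a ratio of two such integrals. For `u ≥ 0`, `(1 + u)^{1/2}` and `(1 + u)^{3/2}`
differ from their second-order Taylor polynomials by at most `u³/16`; integrating against
`e^{-t} t^c` turns each Taylor polynomial into Gamma values and the remainder into an
`O(z⁻³)` error. Dividing the two expansions, which is harmless once `z ≥ 10`, gives the claim.
-/

open Set

theorem abs_integral_sub_le_of_abs_sub_le {α : Type*} [MeasurableSpace α] {μ : Measure α}
    {f g h : α → ℝ} (hf : AEStronglyMeasurable f μ) (hg : Integrable g μ) (hh : Integrable h μ)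
    (hfg : ∀ᵐ x ∂μ, |f x - g x| ≤ h x) :
    |∫ x, f x ∂μ - ∫ x, g x ∂μ| ≤ ∫ x, h x ∂μ := by
  have hfg_int : Integrable (f - g) μ := hh.mono' (hf.sub hg.1) (by simpa using hfg)
  have hf_int : Integrable f μ := by simpa using hfg_int.add hg
  calc |∫ x, f x ∂μ - ∫ x, g x ∂μ| = |∫ x, (f - g) x ∂μ| := by
        rw [integral_sub' hf_int hg]
    _ ≤ ∫ x, |(f - g) x| ∂μ := abs_integral_le_integral_abs
    _ ≤ ∫ x, h x ∂μ := integral_mono_ae hfg_int.abs hh hfg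

section GammaMoments

variable {c : ℝ}

theorem add_natCast_add_one_pos (hc : -1 < c) (k : ℕ) : 0 < c + k + 1 := by
  linarith [k.cast_nonneg (α := ℝ)]

theorem exp_neg_mul_rpow_mul_pow_eqOn (c s : ℝ) (k : ℕ) :
    EqOn (fun t : ℝ => exp (-t) * t ^ c * (s * t) ^ k)
      (fun t => s ^ k * (exp (-t) * t ^ (c + k + 1 - 1))) (Ioi 0) := by
  intro t ht
  simp only [add_sub_cancel_right, rpow_add_natCast ht.ne', mul_pow]
  ring

theorem integrableOn_exp_neg_mul_rpow_mul_pow (hc : -1 < c) (s : ℝ) (k : ℕ) :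
    IntegrableOn (fun t : ℝ => exp (-t) * t ^ c * (s * t) ^ k) (Ioi 0) :=
  IntegrableOn.congr_fun
    ((GammaIntegral_convergent (add_natCast_add_one_pos hc k)).const_mul (s ^ k))
    (exp_neg_mul_rpow_mul_pow_eqOn c s k).symm measurableSet_Ioi

theorem integral_exp_neg_mul_rpow_mul_pow (hc : -1 < c) (s : ℝ) (k : ℕ) :
    ∫ t in Ioi 0, exp (-t) * t ^ c * (s * t) ^ k = s ^ k * Gamma (c + k + 1) := by
  rw [setIntegral_congr_fun measurableSet_Ioi (exp_neg_mul_rpow_mul_pow_eqOn c s k),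
    integral_const_mul, Gamma_eq_integral (add_natCast_add_one_pos hc k)]

end GammaMoments

theorem abs_integral_exp_neg_mul_rpow_mul_comp_sub_le {c s a₁ a₂ K : ℝ} {φ : ℝ → ℝ}
    (hc : -1 < c) (hs : 0 ≤ s) (hφ : Measurable φ)
    (hφ_approx : ∀ u, 0 ≤ u → |φ u - (1 + a₁ * u + a₂ * u ^ 2)| ≤ K * u ^ 3) :
    |(∫ t in Ioi 0, exp (-t) * t ^ c * φ (s * t)) -
        (Gamma (c + 1) + a₁ * s * Gamma (c + 2) + a₂ * s ^ 2 * Gamma (c + 3))| ≤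
      K * s ^ 3 * Gamma (c + 4) := by
  set m : ℕ → ℝ → ℝ := fun k t => exp (-t) * t ^ c * (s * t) ^ k with hm
  have hm_int : ∀ k, IntegrableOn (m k) (Ioi 0) :=
    integrableOn_exp_neg_mul_rpow_mul_pow hc s
  have hm_eq : ∀ k : ℕ, ∫ t in Ioi 0, m k t = s ^ k * Gamma (c + k + 1) :=
    integral_exp_neg_mul_rpow_mul_pow hc s
  have hm01_int : IntegrableOn (fun t => m 0 t + a₁ * m 1 t) (Ioi 0) :=
    (hm_int 0).add ((hm_int 1).const_mul a₁)
  have hpoly_int : IntegrableOn (fun t => m 0 t + a₁ * m 1 t + a₂ * m 2 t) (Ioi 0) :=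
    hm01_int.add ((hm_int 2).const_mul a₂)
  have hpoly : ∫ t in Ioi 0, m 0 t + a₁ * m 1 t + a₂ * m 2 t =
      Gamma (c + 1) + a₁ * s * Gamma (c + 2) + a₂ * s ^ 2 * Gamma (c + 3) := by
    rw [integral_add hm01_int ((hm_int 2).const_mul a₂),
      integral_add (hm_int 0) ((hm_int 1).const_mul a₁), integral_const_mul, integral_const_mul,
      hm_eq, hm_eq, hm_eq]
    norm_num [add_assoc]
    ring
  have hrem : ∫ t in Ioi 0, K * m 3 t = K * s ^ 3 * Gamma (c + 4) := by
    rw [integral_const_mul, hm_eq]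
    norm_num [add_assoc, mul_assoc]
  rw [← hpoly, ← hrem]
  have hbound : ∀ t ∈ Ioi (0 : ℝ),
      |exp (-t) * t ^ c * φ (s * t) - (m 0 t + a₁ * m 1 t + a₂ * m 2 t)| ≤ K * m 3 t := by
    intro t (ht : 0 < t)
    have hw : 0 ≤ exp (-t) * t ^ c := by positivity
    calc |exp (-t) * t ^ c * φ (s * t) - (m 0 t + a₁ * m 1 t + a₂ * m 2 t)|
        = |exp (-t) * t ^ c * (φ (s * t) - (1 + a₁ * (s * t) + a₂ * (s * t) ^ 2))| := by
          simp only [hm]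
          ring_nf
      _ = exp (-t) * t ^ c * |φ (s * t) - (1 + a₁ * (s * t) + a₂ * (s * t) ^ 2)| := by
          rw [abs_mul, abs_of_nonneg hw]
      _ ≤ exp (-t) * t ^ c * (K * (s * t) ^ 3) :=
          mul_le_mul_of_nonneg_left (hφ_approx _ (mul_nonneg hs ht.le)) hw
      _ = K * m 3 t := by ring
  exact abs_integral_sub_le_of_abs_sub_le (Measurable.aestronglyMeasurable (by fun_prop))
    hpoly_int ((hm_int 3).const_mul K) (ae_restrict_of_forall_mem measurableSet_Ioi hbound)

theorem abs_integral_exp_neg_mul_rpow_mul_comp_div_Gamma_sub_le {c s a₁ a₂ K : ℝ} {φ : ℝ → ℝ}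
    (hc : -1 < c) (hs : 0 ≤ s) (hφ : Measurable φ)
    (hφ_approx : ∀ u, 0 ≤ u → |φ u - (1 + a₁ * u + a₂ * u ^ 2)| ≤ K * u ^ 3) :
    |(∫ t in Ioi 0, exp (-t) * t ^ c * φ (s * t)) / Gamma (c + 1) -
        (1 + a₁ * (c + 1) * s + a₂ * ((c + 1) * (c + 2)) * s ^ 2)| ≤
      K * ((c + 1) * (c + 2) * (c + 3)) * s ^ 3 := by
  have hΓ : 0 < Gamma (c + 1) := Gamma_pos_of_pos (by linarith)
  have hΓ2 : Gamma (c + 2) = (c + 1) * Gamma (c + 1) := by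
    rw [← Gamma_add_one (by linarith)]; ring_nf
  have hΓ3 : Gamma (c + 3) = (c + 2) * Gamma (c + 2) := by
    rw [← Gamma_add_one (by linarith)]; ring_nf
  have hΓ4 : Gamma (c + 4) = (c + 3) * Gamma (c + 3) := by
    rw [← Gamma_add_one (by linarith)]; ring_nf
  have h := abs_integral_exp_neg_mul_rpow_mul_comp_sub_le hc hs hφ hφ_approx
  rw [hΓ4, hΓ3, hΓ2] at h
  rw [div_sub' hΓ.ne', abs_div, abs_of_pos hΓ, div_le_iff₀ hΓ]
  have hP : Gamma (c + 1) * (1 + a₁ * (c + 1) * s + a₂ * ((c + 1) * (c + 2)) * s ^ 2) =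
      Gamma (c + 1) + a₁ * s * ((c + 1) * Gamma (c + 1)) +
        a₂ * s ^ 2 * ((c + 2) * ((c + 1) * Gamma (c + 1))) := by ring
  rw [hP]
  exact h.trans_eq (by ring)

theorem abs_one_add_rpow_one_half_sub_le {u : ℝ} (hu : 0 ≤ u) :
    |(1 + u) ^ (1 / 2 : ℝ) - (1 + u / 2 - u ^ 2 / 8)| ≤ u ^ 3 / 16 := by
  set r := (1 + u) ^ (1 / 2 : ℝ)
  have hr : 1 ≤ r := one_le_rpow (by linarith) (by norm_num)
  have hu_eq : u = r ^ 2 - 1 := by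
    rw [← rpow_natCast, ← rpow_mul (by linarith)]; norm_num
  rw [hu_eq, abs_le]
  have hd : 0 ≤ r - 1 := by linarith
  constructor <;> nlinarith [pow_nonneg hd 3, pow_nonneg hd 4, pow_nonneg hd 5, pow_nonneg hd 6]

theorem abs_one_add_rpow_three_halves_sub_le {u : ℝ} (hu : 0 ≤ u) :
    |(1 + u) ^ (3 / 2 : ℝ) - (1 + 3 * u / 2 + 3 * u ^ 2 / 8)| ≤ u ^ 3 / 16 := by
  set r := (1 + u) ^ (1 / 2 : ℝ)
  have hr : 1 ≤ r := one_le_rpow (by linarith) (by norm_num)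
  have hu_eq : u = r ^ 2 - 1 := by
    rw [← rpow_natCast, ← rpow_mul (by linarith)]; norm_num
  have hr3 : (1 + u) ^ (3 / 2 : ℝ) = r ^ 3 := by
    rw [← rpow_mul_natCast (by linarith)]; norm_num
  rw [hr3, hu_eq, abs_le]
  have hd : 0 ≤ r - 1 := by linarith
  constructor <;> nlinarith [pow_nonneg hd 3, pow_nonneg hd 4, pow_nonneg hd 5, pow_nonneg hd 6]

theorem setIntegral_Ioi_eq_setIntegral_Ioi_zero_comp_add (z : ℝ) (F : ℝ → ℝ) :
    ∫ l in Ioi z, F l = ∫ t in Ioi 0, F (t + z) := by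
  rw [← (measurePreserving_add_right volume z).setIntegral_preimage_emb
    (measurableEmbedding_addRight z) F (Ioi z)]
  simp only [preimage, mem_Ioi, lt_add_iff_pos_left]; rfl

theorem setIntegral_Ioi_exp_neg_mul_sq_sub_sq_rpow {z : ℝ} (hz : 0 < z) (ν : ℝ) :
    ∫ l in Ioi z, exp (-l) * (l ^ 2 - z ^ 2) ^ ν =
      exp (-z) * (2 * z) ^ ν * ∫ t in Ioi 0, exp (-t) * t ^ ν * (1 + (2 * z)⁻¹ * t) ^ ν := by
  rw [setIntegral_Ioi_eq_setIntegral_Ioi_zero_comp_add, ← integral_const_mul]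
  refine setIntegral_congr_fun measurableSet_Ioi fun t (ht : 0 < t) => ?_
  have hfactor : (t + z) ^ 2 - z ^ 2 = t * (2 * z * (1 + (2 * z)⁻¹ * t)) := by
    field_simp; ring
  rw [hfactor, mul_rpow ht.le (by positivity), mul_rpow (by positivity) (by positivity),
    neg_add, exp_add]
  ring

theorem Kb_one_div_Kb_two {z : ℝ} (hz : 0 < z) :
    Kb 1 z / Kb 2 z =
      3 / 2 * (∫ t in Ioi 0, exp (-t) * t ^ (1 / 2 : ℝ) * (1 + (2 * z)⁻¹ * t) ^ (1 / 2 : ℝ)) /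
        ∫ t in Ioi 0, exp (-t) * t ^ (3 / 2 : ℝ) * (1 + (2 * z)⁻¹ * t) ^ (3 / 2 : ℝ) := by
  simp only [Kb, setIntegral_Ioi_exp_neg_mul_sq_sub_sq_rpow hz]
  have h32 : (2 * z) ^ (3 / 2 : ℝ) = (2 * z) ^ (1 / 2 : ℝ) * (2 * z) := by
    rw [← rpow_add_one (by positivity)]; norm_num
  norm_num [Nat.factorial, h32]
  field_simp

theorem abs_div_sub_le_of_expansions {s a b : ℝ} (hs : 0 < s) (hs' : s ≤ 1 / 20)
    (ha : |a - (1 + 3 / 4 * s - 15 / 32 * s ^ 2)| ≤ 105 / 128 * s ^ 3)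
    (hb : |b - (1 + 15 / 4 * s + 105 / 32 * s ^ 2)| ≤ 315 / 128 * s ^ 3) :
    |a / b - (1 - 3 * s + 15 / 2 * s ^ 2)| ≤ 128 * s ^ 3 := by
  rw [abs_le] at ha hb ⊢
  have hs3 : 0 < s ^ 3 := by positivity
  have hb0 : 0 < b := by nlinarith
  constructor
  · rw [le_sub_iff_add_le, le_div_iff₀ hb0]
    nlinarith [mul_pos hs hs3, mul_pos hs hs]
  · rw [sub_le_iff_le_add, div_le_iff₀ hb0]
    nlinarith [mul_pos hs hs3, mul_pos hs hs]

/-- For `z ≥ 10`, `|K_1(z)/K_2(z) − 1 + 3/(2z) − 15/(8z²)| ≤ 16/z³`. -/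
theorem ratio_large_z (z : ℝ) (hz : 10 ≤ z) :
    |Kb 1 z / Kb 2 z - 1 + 3 / (2 * z) - 15 / (8 * z ^ 2)| ≤ 16 / z ^ 3 := by
  have hz0 : 0 < z := by linarith
  rw [Kb_one_div_Kb_two hz0]
  set s := (2 * z)⁻¹ with hs_def
  have hs : 0 < s := by positivity
  have hs' : s ≤ 1 / 20 := by
    rw [hs_def, inv_le_comm₀ (by positivity) (by norm_num)]; linarith
  have ha := abs_integral_exp_neg_mul_rpow_mul_comp_div_Gamma_sub_le (c := 1 / 2) (a₁ := 1 / 2)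
    (a₂ := -1 / 8) (K := 1 / 16) (φ := fun u => (1 + u) ^ (1 / 2 : ℝ)) (by norm_num) hs.le
    (by fun_prop)
    (fun u hu => by convert abs_one_add_rpow_one_half_sub_le hu using 2 <;> ring)
  have hb := abs_integral_exp_neg_mul_rpow_mul_comp_div_Gamma_sub_le (c := 3 / 2) (a₁ := 3 / 2)
    (a₂ := 3 / 8) (K := 1 / 16) (φ := fun u => (1 + u) ^ (3 / 2 : ℝ)) (by norm_num) hs.le
    (by fun_prop)
    (fun u hu => by convert abs_one_add_rpow_three_halves_sub_le hu using 2 <;> ring)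
  norm_num at ha hb
  set I₁ := ∫ t in Ioi 0, exp (-t) * t ^ (1 / 2 : ℝ) * (1 + s * t) ^ (1 / 2 : ℝ)
  set I₂ := ∫ t in Ioi 0, exp (-t) * t ^ (3 / 2 : ℝ) * (1 + s * t) ^ (3 / 2 : ℝ)
  have hΓ : Gamma (5 / 2) = 3 / 2 * Gamma (3 / 2) := by
    rw [show (5 / 2 : ℝ) = 3 / 2 + 1 by norm_num, Gamma_add_one (by norm_num)]
  have hΓ0 : Gamma (3 / 2) ≠ 0 := (Gamma_pos_of_pos (by norm_num)).ne'
  have hz_eq : z = (2 * s)⁻¹ := by rw [hs_def]; field_simp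
  rw [hz_eq]
  convert abs_div_sub_le_of_expansions hs hs' ha hb using 2
  · rw [hΓ]; field_simp; ring
  · field_simp; ring
end
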